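/- arXiv:2604.16791 — 2 statements merged into one kernel-verified Lean document; each statement's English description precedes it below -/
import Mathlib

section
/- Let w be homogeneous of degree α ≥ 0 on the cone Σ with x·η = 0 on ∂Σ, f smooth with sufficient decay, f ≠ 0, and λ = (∫_Σ |f|²|x|² w dx / ∫_Σ |∇f|² w dx)^{1/4}. Then (∫_Σ |∇f|² w dx)^{1/2}(∫_Σ |f|²|x|² w dx)^{1/2} − ((n+α)/2)∫_Σ |f|² w dx = (λ²/2) ∫_Σ |∇(f e^{|x|²/(2λ²)})|² e^{−|x|²/λ²} w(x) dx. -/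
set_option maxHeartbeats 1000000

open MeasureTheory Real Set
open scoped RealInnerProductSpace

section general
variable {E : Type*} [NormedAddCommGroup E] [InnerProductSpace ℝ E] [CompleteSpace E]

theorem grad_mul_exp (f : E → ℝ) (hf : ContDiff ℝ (⊤ : ℕ∞) f) (c : ℝ) (hc : c ≠ 0) (x : E) :
    HasGradientAt (fun y => f y * Real.exp (‖y‖ ^ 2 / (2 * c ^ 2)))
      (Real.exp (‖x‖ ^ 2 / (2 * c ^ 2)) • (gradient f x + (f x / c ^ 2) • x)) x := by
  have hdf : DifferentiableAt ℝ f x := (hf.differentiable (by simp)).differentiableAt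
  have hgf : HasGradientAt f (gradient f x) x := hdf.hasGradientAt
  have hfF : HasFDerivAt f (InnerProductSpace.toDual ℝ E (gradient f x)) x :=
    hgf.hasFDerivAt
  have h0 : HasFDerivAt (fun y : E => (⟪y, y⟫ : ℝ))
      ((fderivInnerCLM ℝ (x, x)).comp
        ((ContinuousLinearMap.id ℝ E).prod (ContinuousLinearMap.id ℝ E))) x :=
    (hasFDerivAt_id x).inner ℝ (hasFDerivAt_id x)
  have h0' : HasFDerivAt (fun y : E => ‖y‖ ^ 2 / (2 * c ^ 2))
      ((1 / (2 * c ^ 2)) • ((fderivInnerCLM ℝ (x, x)).comp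
        ((ContinuousLinearMap.id ℝ E).prod (ContinuousLinearMap.id ℝ E)))) x := by
    have : (fun y : E => ‖y‖ ^ 2 / (2 * c ^ 2)) =
        fun y : E => (1 / (2 * c ^ 2)) * ⟪y, y⟫ := by
      funext y; rw [real_inner_self_eq_norm_sq]; ring
    rw [this]
    exact h0.const_mul (1 / (2 * c ^ 2))
  have he : HasFDerivAt (fun y : E => Real.exp (‖y‖ ^ 2 / (2 * c ^ 2)))
      (Real.exp (‖x‖ ^ 2 / (2 * c ^ 2)) • ((1 / (2 * c ^ 2)) •
        ((fderivInnerCLM ℝ (x, x)).comp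
          ((ContinuousLinearMap.id ℝ E).prod (ContinuousLinearMap.id ℝ E))))) x := h0'.exp
  have hmul := hfF.mul he
  rw [hasGradientAt_iff_hasFDerivAt]
  refine hmul.congr_fderiv ?_
  symm
  ext u
  simp only [InnerProductSpace.toDual_apply_apply, ContinuousLinearMap.add_apply,
    ContinuousLinearMap.smul_apply, ContinuousLinearMap.comp_apply,
    ContinuousLinearMap.prod_apply, ContinuousLinearMap.id_apply, fderivInnerCLM_apply,
    inner_add_left, inner_smul_left, smul_eq_mul, RCLike.star_def, conj_trivial]
  rw [real_inner_comm u x]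
  field_simp
  ring

theorem grad_sq_expand (f : E → ℝ) (hf : ContDiff ℝ (⊤ : ℕ∞) f) (c : ℝ) (hc : c ≠ 0) (x : E) :
    ‖gradient (fun y => f y * Real.exp (‖y‖ ^ 2 / (2 * c ^ 2))) x‖ ^ 2 *
        Real.exp (-‖x‖ ^ 2 / c ^ 2)
      = ‖gradient f x‖ ^ 2 + (2 / c ^ 2) * (f x * ⟪gradient f x, x⟫)
        + (1 / c ^ 4) * (f x ^ 2 * ‖x‖ ^ 2) := by
  rw [(grad_mul_exp f hf c hc x).gradient]
  rw [norm_smul, mul_pow, norm_add_sq_real, inner_smul_right, norm_smul]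
  rw [Real.norm_eq_abs, Real.norm_eq_abs, abs_of_pos (Real.exp_pos _), mul_pow, sq_abs]
  have hexp : Real.exp (‖x‖ ^ 2 / (2 * c ^ 2)) ^ 2 * Real.exp (-‖x‖ ^ 2 / c ^ 2) = 1 := by
    rw [sq, ← Real.exp_add, ← Real.exp_add, ← Real.exp_zero]
    congr 1
    field_simp
    ring
  calc Real.exp (‖x‖ ^ 2 / (2 * c ^ 2)) ^ 2 *
        (‖gradient f x‖ ^ 2 + 2 * (f x / c ^ 2 * ⟪gradient f x, x⟫) +
          (f x / c ^ 2) ^ 2 * ‖x‖ ^ 2) * Real.exp (-‖x‖ ^ 2 / c ^ 2)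
      = (Real.exp (‖x‖ ^ 2 / (2 * c ^ 2)) ^ 2 * Real.exp (-‖x‖ ^ 2 / c ^ 2)) *
        (‖gradient f x‖ ^ 2 + 2 * (f x / c ^ 2 * ⟪gradient f x, x⟫) +
          (f x / c ^ 2) ^ 2 * ‖x‖ ^ 2) := by ring
    _ = ‖gradient f x‖ ^ 2 + (2 / c ^ 2) * (f x * ⟪gradient f x, x⟫)
        + (1 / c ^ 4) * (f x ^ 2 * ‖x‖ ^ 2) := by
        rw [hexp, one_mul]
        field_simp

theorem inner_gradient_eq_fderiv (f : E → ℝ) (hf : ContDiff ℝ (⊤ : ℕ∞) f) (y u : E) :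
    ⟪gradient f y, u⟫ = fderiv ℝ f y u :=
  InnerProductSpace.toDual_symm_apply

theorem continuous_gradient (f : E → ℝ) (hf : ContDiff ℝ (⊤ : ℕ∞) f) :
    Continuous (gradient f) := by
  have : Continuous (fderiv ℝ f) := hf.continuous_fderiv (by simp)
  exact (LinearIsometryEquiv.continuous _).comp this

theorem ftc_ray (f : E → ℝ) (hf : ContDiff ℝ (⊤ : ℕ∞) f) (hdecay : HasCompactSupport f)
    {x : E} (hx : x ≠ 0) :
    ∫ t in Ioi (1 : ℝ), (2 / t) * (f (t • x) * ⟪gradient f (t • x), t • x⟫) = -f x ^ 2 := by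
  have hxpos : 0 < ‖x‖ := norm_pos_iff.2 hx
  obtain ⟨R₀, hR₀⟩ := hdecay.isBounded.subset_closedBall 0
  set R : ℝ := max R₀ 0 with hRdef
  have hsupp : ∀ y : E, R < ‖y‖ → f y = 0 := by
    intro y hy
    apply image_eq_zero_of_notMem_tsupport
    intro hmem
    have := hR₀ hmem
    rw [Metric.mem_closedBall, dist_zero_right] at this
    exact absurd this (not_le.2 (lt_of_le_of_lt (le_max_left _ _) hy))
  set T : ℝ := R / ‖x‖ + 2 with hTdef
  have hT1 : (1 : ℝ) ≤ T := by
    have : 0 ≤ R / ‖x‖ := by positivity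
    simp only [hTdef]; linarith
  have hbig : ∀ t : ℝ, T ≤ t → f (t • x) = 0 := by
    intro t htT
    apply hsupp
    have ht0 : 0 < t := lt_of_lt_of_le (by linarith) htT
    rw [norm_smul, Real.norm_eq_abs, abs_of_pos ht0]
    have h1 : R / ‖x‖ < t := by simp only [hTdef] at htT; linarith
    calc R = (R / ‖x‖) * ‖x‖ := by field_simp
    _ < t * ‖x‖ := by exact mul_lt_mul_of_pos_right h1 hxpos
  set g : ℝ → ℝ := fun t => (2 / t) * (f (t • x) * ⟪gradient f (t • x), t • x⟫) with hgdef
  have hgcont : ContinuousOn g {t : ℝ | t ≠ 0} := by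
    apply ContinuousOn.mul
    · exact continuousOn_const.div continuousOn_id fun t ht => ht
    · apply Continuous.continuousOn
      have hsm : Continuous fun t : ℝ => t • x := continuous_id.smul continuous_const
      exact ((hf.continuous.comp hsm).mul
        (((continuous_gradient f hf).comp hsm).inner hsm))
  have hderiv : ∀ t ∈ Icc (1 : ℝ) T, HasDerivAt (fun s => f (s • x) ^ 2) (g t) t := by
    intro t ht
    have ht0 : (0 : ℝ) < t := lt_of_lt_of_le one_pos ht.1
    have hsm : HasDerivAt (fun s : ℝ => s • x) x t := by
      simpa using (hasDerivAt_id t).smul_const x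
    have hdf : HasFDerivAt f (fderiv ℝ f (t • x)) (t • x) :=
      ((hf.differentiable (by simp)) (t • x)).hasFDerivAt
    have hcomp : HasDerivAt (fun s : ℝ => f (s • x)) (fderiv ℝ f (t • x) x) t :=
      hdf.comp_hasDerivAt t hsm
    have hsq := hcomp.pow 2
    refine hsq.congr_deriv ?_
    symm
    rw [hgdef]
    simp only [Nat.cast_ofNat, pow_one]
    rw [← inner_gradient_eq_fderiv f hf, inner_smul_right]
    field_simp
    ring
  have hint : IntervalIntegrable g volume 1 T := by
    apply ContinuousOn.intervalIntegrable
    apply hgcont.mono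
    rw [uIcc_of_le hT1]
    intro t ht
    exact (lt_of_lt_of_le one_pos ht.1).ne'
  have hftc : ∫ t in (1 : ℝ)..T, g t = f (T • x) ^ 2 - f ((1 : ℝ) • x) ^ 2 := by
    have := intervalIntegral.integral_eq_sub_of_hasDerivAt (f := fun s => f (s • x) ^ 2)
      (f' := g) (a := 1) (b := T) (fun t ht => hderiv t (by rwa [uIcc_of_le hT1] at ht)) hint
    simpa using this
  have hT0 : f (T • x) = 0 := hbig T le_rfl
  have hsplit : ∫ t in Ioi (1 : ℝ), g t = ∫ t in Ioc (1 : ℝ) T, g t := by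
    rw [← Ioc_union_Ioi_eq_Ioi hT1, setIntegral_union (Ioc_disjoint_Ioi le_rfl)
      measurableSet_Ioi]
    · have : ∫ t in Ioi T, g t = 0 := by
        rw [setIntegral_congr_fun measurableSet_Ioi (g := fun _ => (0:ℝ))]
        · exact integral_zero _ _
        · intro t ht
          have : f (t • x) = 0 := hbig t (le_of_lt ht)
          simp [hgdef, this]
      rw [this, add_zero]
    · rw [← intervalIntegrable_iff_integrableOn_Ioc_of_le hT1]; exact hint
    · apply (integrableOn_congr_fun (g := fun _ => (0:ℝ)) _ measurableSet_Ioi).2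
      · exact integrableOn_zero
      · intro t ht
        have : f (t • x) = 0 := hbig t (le_of_lt ht)
        simp [hgdef, this]
  rw [hsplit, ← intervalIntegral.integral_of_le hT1, hftc, hT0, one_smul]
  ring

end general

section euclidean
variable {n : ℕ} {Ω : Set (EuclideanSpace ℝ (Fin n))}
  {w : EuclideanSpace ℝ (Fin n) → ℝ} {α : ℝ}

theorem cone_mem_iff (hcone : ∀ t : ℝ, 0 < t → ∀ x ∈ Ω, t • x ∈ Ω)
    {t : ℝ} (ht : 0 < t) (x : EuclideanSpace ℝ (Fin n)) : t • x ∈ Ω ↔ x ∈ Ω := by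
  constructor
  · intro h
    simpa [smul_smul, inv_mul_cancel₀ ht.ne'] using hcone t⁻¹ (by positivity) _ h
  · exact hcone t ht x

theorem indicator_comp_smul (hcone : ∀ t : ℝ, 0 < t → ∀ x ∈ Ω, t • x ∈ Ω)
    {t : ℝ} (ht : 0 < t) (H : EuclideanSpace ℝ (Fin n) → ℝ) :
    (Ω.indicator fun x => H (t • x)) = fun x => Ω.indicator H (t • x) := by
  funext x
  by_cases hx : x ∈ Ω
  · rw [Set.indicator_of_mem hx, Set.indicator_of_mem ((cone_mem_iff hcone ht x).2 hx)]
  · rw [Set.indicator_of_notMem hx,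
      Set.indicator_of_notMem (fun h => hx ((cone_mem_iff hcone ht x).1 h))]

theorem scale_setIntegral (hopen : IsOpen Ω)
    (hcone : ∀ t : ℝ, 0 < t → ∀ x ∈ Ω, t • x ∈ Ω)
    (hhom : ∀ t : ℝ, 0 < t → ∀ x ∈ Ω, w (t • x) = t ^ α * w x)
    {t : ℝ} (ht : 0 < t) (G : EuclideanSpace ℝ (Fin n) → ℝ) :
    ∫ x in Ω, G (t • x) * w x = t ^ (-(n : ℝ) - α) * ∫ x in Ω, G x * w x := by
  have hne : (t : ℝ) ^ α ≠ 0 := (Real.rpow_pos_of_pos ht α).ne'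
  have step1 : ∫ x in Ω, G (t • x) * w x
      = ∫ x in Ω, t ^ (-α) * ((fun y => G y * w y) (t • x)) := by
    apply setIntegral_congr_fun hopen.measurableSet
    intro x hx
    simp only
    rw [hhom t ht x hx, Real.rpow_neg ht.le]
    field_simp
  rw [step1, integral_const_mul]
  have step2 : ∫ x in Ω, (fun y => G y * w y) (t • x)
      = (t ^ n)⁻¹ * ∫ x in Ω, G x * w x := by
    rw [← integral_indicator hopen.measurableSet, ← integral_indicator hopen.measurableSet,
      indicator_comp_smul hcone ht (fun y => G y * w y)]
    have := Measure.integral_comp_smul (volume : Measure (EuclideanSpace ℝ (Fin n)))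
      (Ω.indicator fun y => G y * w y) t
    rw [this, finrank_euclideanSpace, Fintype.card_fin, abs_of_nonneg (by positivity),
      smul_eq_mul]
  rw [step2, ← Real.rpow_natCast t n, ← Real.rpow_neg ht.le, ← mul_assoc,
    ← Real.rpow_add ht]
  ring_nf

theorem scale_integrableOn (hopen : IsOpen Ω)
    (hcone : ∀ t : ℝ, 0 < t → ∀ x ∈ Ω, t • x ∈ Ω)
    (hhom : ∀ t : ℝ, 0 < t → ∀ x ∈ Ω, w (t • x) = t ^ α * w x)
    {t : ℝ} (ht : 0 < t) {G : EuclideanSpace ℝ (Fin n) → ℝ}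
    (hI : IntegrableOn (fun y => G y * w y) Ω) :
    IntegrableOn (fun x => G (t • x) * w x) Ω := by
  have h1 : Integrable (fun x => (Ω.indicator fun y => G y * w y) (t • x)) := by
    exact hI.integrable_indicator hopen.measurableSet |>.comp_smul ht.ne'
  rw [← indicator_comp_smul hcone ht (fun y => G y * w y)] at h1
  have h2 : IntegrableOn (fun x => (fun y => G y * w y) (t • x)) Ω :=
    (integrable_indicator_iff hopen.measurableSet).1 h1
  have h3 := h2.const_mul (t ^ (-α))
  apply h3.congr
  filter_upwards [ae_restrict_mem hopen.measurableSet] with x hx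
  show t ^ (-α) * (G (t • x) * w (t • x)) = G (t • x) * w x
  rw [hhom t ht x hx, Real.rpow_neg ht.le]
  have hne : (t : ℝ) ^ α ≠ 0 := (Real.rpow_pos_of_pos ht α).ne'
  field_simp

theorem fubini_core (hopen : IsOpen Ω)
    (hcone : ∀ t : ℝ, 0 < t → ∀ x ∈ Ω, t • x ∈ Ω)
    (hw_pos : ∀ x ∈ Ω, 0 < w x)
    (hwm : AEStronglyMeasurable w (volume.restrict Ω))
    (hhom : ∀ t : ℝ, 0 < t → ∀ x ∈ Ω, w (t • x) = t ^ α * w x)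
    (hnα : 0 < (n : ℝ) + α)
    (h0 : (volume : Measure (EuclideanSpace ℝ (Fin n))) {0} = 0)
    (f : EuclideanSpace ℝ (Fin n) → ℝ)
    (hf : ContDiff ℝ (⊤ : ℕ∞) f) (hdecay : HasCompactSupport f)
    (hID : IntegrableOn (fun y => (f y * ⟪gradient f y, y⟫) * w y) Ω) :
    IntegrableOn (fun x => f x ^ 2 * w x) Ω ∧
      ∫ x in Ω, f x ^ 2 * w x =
        -(2 / ((n : ℝ) + α)) * ∫ x in Ω, (f x * ⟪gradient f x, x⟫) * w x := by
  classical
  set h : EuclideanSpace ℝ (Fin n) → ℝ := fun y => f y * ⟪gradient f y, y⟫ with hhdef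
  have hhcont : Continuous h :=
    hf.continuous.mul ((continuous_gradient f hf).inner continuous_id)
  set μ : Measure ℝ := volume.restrict (Ioi (1 : ℝ)) with hμdef
  set ν : Measure (EuclideanSpace ℝ (Fin n)) := volume.restrict Ω with hνdef
  set Ψ : ℝ → EuclideanSpace ℝ (Fin n) → ℝ := fun t x => (2 / t) * h (t • x) * w x with hΨdef
  have hwae : ∀ᵐ x ∂ν, x ∈ Ω := ae_restrict_mem hopen.measurableSet
  have htae : ∀ᵐ t ∂μ, t ∈ Ioi (1 : ℝ) := ae_restrict_mem measurableSet_Ioi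
  -- |h| * w is integrable on Ω
  have hIDabs : IntegrableOn (fun y => |h y| * w y) Ω := by
    apply hID.abs.congr
    filter_upwards [hwae] with y hy
    rw [abs_mul, abs_of_pos (hw_pos y hy)]
  -- measurability of Ψ on the product
  have hmeas : AEStronglyMeasurable (Function.uncurry Ψ) (μ.prod ν) := by
    have h1 : Measurable fun p : ℝ × EuclideanSpace ℝ (Fin n) => (2 / p.1) * h (p.1 • p.2) := by
      apply Measurable.mul
      · exact (measurable_const.div measurable_fst)
      · exact (hhcont.comp (continuous_fst.smul continuous_snd)).measurable
    exact h1.aestronglyMeasurable.mul (hwm.comp_snd)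
  -- sections are integrable
  have hsec : ∀ t : ℝ, t ∈ Ioi (1 : ℝ) → Integrable (fun x => Ψ t x) ν := by
    intro t ht
    have ht0 : (0 : ℝ) < t := lt_trans one_pos ht
    have := (scale_integrableOn hopen hcone hhom ht0 (G := h) hID).const_mul (2 / t)
    apply this.congr
    filter_upwards with x
    show (2 / t) * (h (t • x) * w x) = (2 / t) * h (t • x) * w x
    ring
  -- the norm-section integrals
  have habs_eq : ∀ t : ℝ, t ∈ Ioi (1 : ℝ) →
      (∫ x in Ω, ‖Ψ t x‖) =
        (2 * ∫ x in Ω, |h x| * w x) * t ^ (-((n : ℝ) + α) - 1) := by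
    intro t ht
    have ht0 : (0 : ℝ) < t := lt_trans one_pos ht
    have e1 : (∫ x in Ω, ‖Ψ t x‖) = ∫ x in Ω, (2 / t) * ((fun y => |h y|) (t • x) * w x) := by
      apply setIntegral_congr_fun hopen.measurableSet
      intro x hx
      show ‖(2 / t) * h (t • x) * w x‖ = (2 / t) * (|h (t • x)| * w x)
      rw [Real.norm_eq_abs, abs_mul, abs_mul, abs_of_pos (by positivity : (0:ℝ) < 2 / t),
        abs_of_pos (hw_pos x hx)]
      ring
    rw [e1, integral_const_mul, scale_setIntegral hopen hcone hhom ht0 (fun y => |h y|)]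
    have hexp : t ^ (-((n : ℝ) + α) - 1) = t ^ (-(n : ℝ) - α) / t := by
      rw [div_eq_mul_inv, ← Real.rpow_neg_one t, ← Real.rpow_add ht0]
      congr 1
      ring
    rw [hexp]
    field_simp
  -- integrability on the product
  have hprod : Integrable (Function.uncurry Ψ) (μ.prod ν) := by
    rw [integrable_prod_iff hmeas]
    constructor
    · filter_upwards [htae] with t ht
      exact hsec t ht
    · apply Integrable.congr
        (((integrableOn_Ioi_rpow_of_lt (by linarith : -((n:ℝ)+α) - 1 < -1) one_pos).const_mul
          (2 * ∫ x in Ω, |h x| * w x)))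
      filter_upwards [htae] with t ht
      exact (habs_eq t ht).symm
  -- swap
  have hswap := integral_integral_swap hprod
  -- compute the t-then-x side
  have hleft : ∫ t, ∫ x, Ψ t x ∂ν ∂μ =
      (2 * ∫ x in Ω, h x * w x) * (((n : ℝ) + α))⁻¹ := by
    have e1 : ∀ t ∈ Ioi (1:ℝ), (∫ x, Ψ t x ∂ν) =
        (2 * ∫ x in Ω, h x * w x) * t ^ (-((n : ℝ) + α) - 1) := by
      intro t ht
      have ht0 : (0 : ℝ) < t := lt_trans one_pos ht
      have e2 : (∫ x, Ψ t x ∂ν) = ∫ x in Ω, (2 / t) * (h (t • x) * w x) := by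
        apply integral_congr_ae
        filter_upwards with x
        show (2 / t) * h (t • x) * w x = (2 / t) * (h (t • x) * w x)
        ring
      rw [e2, integral_const_mul, scale_setIntegral hopen hcone hhom ht0 h]
      have hexp : t ^ (-((n : ℝ) + α) - 1) = t ^ (-(n : ℝ) - α) / t := by
        rw [div_eq_mul_inv, ← Real.rpow_neg_one t, ← Real.rpow_add ht0]
        congr 1
        ring
      rw [hexp]
      field_simp
    have e3 : ∫ t, ∫ x, Ψ t x ∂ν ∂μ =
        ∫ t in Ioi (1:ℝ), (2 * ∫ x in Ω, h x * w x) * t ^ (-((n : ℝ) + α) - 1) := by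
      apply integral_congr_ae
      filter_upwards [htae] with t ht
      exact e1 t ht
    rw [e3, integral_const_mul, integral_Ioi_rpow_of_lt (by linarith) one_pos]
    rw [Real.one_rpow]
    have he' : -((n : ℝ) + α) - 1 + 1 = -((n : ℝ) + α) := by ring
    rw [he']
    congr 1
    rw [neg_div_neg_eq, one_div]
  -- compute the x-then-t side
  have hinner : ∀ᵐ x ∂ν, (∫ t, Ψ t x ∂μ) = (-f x ^ 2) * w x := by
    have hx0 : ∀ᵐ x ∂ν, x ≠ (0 : EuclideanSpace ℝ (Fin n)) := by
      refine (ae_restrict_of_ae ?_)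
      rw [ae_iff]
      simpa using h0
    filter_upwards [hx0] with x hx
    have e4 : (∫ t, Ψ t x ∂μ) = (∫ t in Ioi (1:ℝ), (2 / t) * h (t • x)) * w x := by
      rw [← integral_mul_const]
    have e5 : (∫ t in Ioi (1:ℝ), (2 / t) * h (t • x)) = -f x ^ 2 := by
      rw [← ftc_ray f hf hdecay hx]
    rw [e4, e5]
  have hright : ∫ x, ∫ t, Ψ t x ∂μ ∂ν = ∫ x in Ω, (-f x ^ 2) * w x := by
    exact integral_congr_ae hinner
  -- integrability of f^2 w
  have hInt2 : IntegrableOn (fun x => f x ^ 2 * w x) Ω := by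
    have hnorm := hprod.swap.integral_norm_prod_left
    have hub : ∀ᵐ x ∂ν, ‖f x ^ 2 * w x‖ ≤ ‖∫ t, ‖Ψ t x‖ ∂μ‖ := by
      filter_upwards [hinner] with x hx
      calc ‖f x ^ 2 * w x‖ = ‖-(f x ^ 2 * w x)‖ := (norm_neg _).symm
      _ = ‖∫ t, Ψ t x ∂μ‖ := by rw [hx]; congr 1; ring
      _ ≤ ∫ t, ‖Ψ t x‖ ∂μ := norm_integral_le_integral_norm _
      _ ≤ ‖∫ t, ‖Ψ t x‖ ∂μ‖ := Real.le_norm_self _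
    have hm2 : AEStronglyMeasurable (fun x => f x ^ 2 * w x) ν :=
      ((hf.continuous.pow 2).aestronglyMeasurable).mul hwm
    exact Integrable.mono hnorm hm2 hub
  refine ⟨hInt2, ?_⟩
  have e6 : ∫ x in Ω, (-f x ^ 2) * w x = - ∫ x in Ω, f x ^ 2 * w x := by
    rw [← integral_neg]
    apply integral_congr_ae
    filter_upwards with x
    ring
  rw [hleft, hright, e6] at hswap
  have hne : ((n : ℝ) + α) ≠ 0 := hnα.ne'
  have e7 : ∫ x in Ω, f x ^ 2 * w x
      = -((2 * ∫ x in Ω, h x * w x) * ((n : ℝ) + α)⁻¹) := by linarith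
  show ∫ x in Ω, f x ^ 2 * w x = -(2 / ((n : ℝ) + α)) * ∫ x in Ω, h x * w x
  rw [e7]
  field_simp

end euclidean

open MeasureTheory

/-- HUP identity with homogeneous weight: for the optimal scale
`λ = (∫ f²|x|² w / ∫ |∇f|² w)^{1/4}`, the uncertainty deficit equals
`(λ²/2) ∫ |∇(f e^{|x|²/(2λ²)})|² e^{−|x|²/λ²} w dx`. -/
theorem hup_identity {n : ℕ} (Ω : Set (EuclideanSpace ℝ (Fin n)))
    (hopen : IsOpen Ω) (hconv : Convex ℝ Ω)
    (hcone : ∀ t : ℝ, 0 < t → ∀ x ∈ Ω, t • x ∈ Ω)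
    (hbdry : ∀ x ∈ frontier Ω, ∀ η : EuclideanSpace ℝ (Fin n),
      (∀ y ∈ Ω, (inner ℝ η (y - x) : ℝ) ≤ 0) → (inner ℝ x η : ℝ) = 0)
    (w : EuclideanSpace ℝ (Fin n) → ℝ) (α : ℝ) (hα : 0 ≤ α)
    (hw_pos : ∀ x ∈ Ω, 0 < w x) (hw_smooth : ContDiffOn ℝ (⊤ : ℕ∞) w Ω)
    (hhom : ∀ t : ℝ, 0 < t → ∀ x ∈ Ω, w (t • x) = t ^ α * w x)
    (f : EuclideanSpace ℝ (Fin n) → ℝ)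
    (hf : ContDiff ℝ (⊤ : ℕ∞) f) (hdecay : HasCompactSupport f) (hfne : f ≠ 0)
    (hA : 0 < ∫ x in Ω, ‖gradient f x‖ ^ 2 * w x)
    (lam : ℝ)
    (hlam : lam = ((∫ x in Ω, f x ^ 2 * ‖x‖ ^ 2 * w x) /
      ∫ x in Ω, ‖gradient f x‖ ^ 2 * w x) ^ ((1 : ℝ) / 4)) :
    (∫ x in Ω, ‖gradient f x‖ ^ 2 * w x) ^ ((1 : ℝ) / 2) *
        (∫ x in Ω, f x ^ 2 * ‖x‖ ^ 2 * w x) ^ ((1 : ℝ) / 2) -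
      (((n : ℝ) + α) / 2) * ∫ x in Ω, f x ^ 2 * w x =
    (lam ^ 2 / 2) * ∫ x in Ω,
      ‖gradient (fun y => f y * Real.exp (‖y‖ ^ 2 / (2 * lam ^ 2))) x‖ ^ 2 *
        Real.exp (-‖x‖ ^ 2 / lam ^ 2) * w x := by
  classical
  -- dispose of the degenerate case n = 0
  rcases Nat.eq_zero_or_pos n with hn0 | hn
  · exfalso
    subst hn0
    haveI : Subsingleton (EuclideanSpace ℝ (Fin 0)) :=
      ⟨fun a b => by ext i; exact i.elim0⟩
    have hz : ∀ x : EuclideanSpace ℝ (Fin 0), ‖gradient f x‖ ^ 2 * w x = 0 := by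
      intro x
      rw [Subsingleton.elim (gradient f x) 0]
      simp
    simp only [hz, integral_zero] at hA
    exact lt_irrefl 0 hA
  -- basic setup
  set A := ∫ x in Ω, ‖gradient f x‖ ^ 2 * w x with hAdef
  set B := ∫ x in Ω, f x ^ 2 * ‖x‖ ^ 2 * w x with hBdef
  set C := ∫ x in Ω, f x ^ 2 * w x with hCdef
  have hwm : AEStronglyMeasurable w (volume.restrict Ω) :=
    (hw_smooth.continuousOn).aestronglyMeasurable hopen.measurableSet
  have hwae : ∀ᵐ x ∂(volume.restrict Ω), x ∈ Ω := ae_restrict_mem hopen.measurableSet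
  have hgradcont : Continuous (gradient f) := by
    have : Continuous (fderiv ℝ f) := hf.continuous_fderiv (by simp)
    exact (LinearIsometryEquiv.continuous _).comp this
  have hIA : IntegrableOn (fun x => ‖gradient f x‖ ^ 2 * w x) Ω := by
    by_contra hc
    rw [hAdef, integral_undef hc] at hA
    exact lt_irrefl 0 hA
  by_cases hIB : IntegrableOn (fun x => f x ^ 2 * ‖x‖ ^ 2 * w x) Ω
  swap
  -- degenerate case : B not integrable, so B = C = 0 and lam = 0
  · have hB0 : B = 0 := integral_undef hIB
    have hIC : ¬ IntegrableOn (fun x => f x ^ 2 * w x) Ω := by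
      intro hIC
      apply hIB
      obtain ⟨R₀, hR₀⟩ := hdecay.isBounded.subset_closedBall 0
      set R : ℝ := max R₀ 0 with hRdef
      apply Integrable.mono (hIC.const_mul (R ^ 2))
      · exact (((hf.continuous.pow 2).mul
          ((continuous_norm).pow 2)).aestronglyMeasurable).mul hwm
      · filter_upwards with x
        rcases eq_or_ne (f x) 0 with hfx | hfx
        · simp [hfx]
        · have hxR : ‖x‖ ≤ R := by
            have : x ∈ tsupport f := subset_tsupport f hfx
            have := hR₀ this
            rw [Metric.mem_closedBall, dist_zero_right] at this
            exact le_trans this (le_max_left _ _)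
          rw [Real.norm_eq_abs, Real.norm_eq_abs]
          calc |f x ^ 2 * ‖x‖ ^ 2 * w x| = (‖x‖ ^ 2) * |f x ^ 2 * w x| := by
                rw [abs_mul, abs_mul, abs_of_nonneg (sq_nonneg (f x)),
                  abs_of_nonneg (sq_nonneg ‖x‖), abs_mul, abs_of_nonneg (sq_nonneg (f x))]
                ring
          _ ≤ R ^ 2 * |f x ^ 2 * w x| := by
                apply mul_le_mul_of_nonneg_right _ (abs_nonneg _)
                exact pow_le_pow_left₀ (norm_nonneg x) hxR 2
          _ = |R ^ 2 * (f x ^ 2 * w x)| := by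
                have habs : |R ^ 2 * (f x ^ 2 * w x)| = R ^ 2 * (|f x ^ 2| * |w x|) := by
                  rw [abs_mul, abs_mul, abs_of_nonneg (sq_nonneg R)]
                rw [habs, abs_mul]
    have hC0 : C = 0 := integral_undef hIC
    have hlam0 : lam = 0 := by
      rw [hlam, hB0, zero_div, Real.zero_rpow (by norm_num)]
    rw [hB0, hC0, hlam0]
    rw [Real.zero_rpow (by norm_num)]
    norm_num
  -- main case
  have hApos : 0 < A := hA
  have hnα : 0 < (n : ℝ) + α := by
    have : (1 : ℝ) ≤ (n : ℝ) := by exact_mod_cast hn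
    linarith
  haveI : Nontrivial (EuclideanSpace ℝ (Fin n)) := by
    apply Module.nontrivial_of_finrank_pos (R := ℝ)
    rw [finrank_euclideanSpace, Fintype.card_fin]
    exact hn
  have h0 : (volume : Measure (EuclideanSpace ℝ (Fin n))) {0} = 0 :=
    measure_singleton 0
  -- the D integrand is integrable (AM-GM domination)
  have hID : IntegrableOn (fun y => (f y * ⟪gradient f y, y⟫) * w y) Ω := by
    apply Integrable.mono ((hIA.add hIB).const_mul ((1:ℝ)/2))
    · exact ((hf.continuous.mul (hgradcont.inner continuous_id)).aestronglyMeasurable).mul hwm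
    · filter_upwards [hwae] with y hy
      have hW : 0 < w y := hw_pos y hy
      have hcs : |⟪gradient f y, y⟫| ≤ ‖gradient f y‖ * ‖y‖ := abs_real_inner_le_norm _ _
      have h1 : |f y * ⟪gradient f y, y⟫ * w y| = |f y| * |⟪gradient f y, y⟫| * w y := by
        rw [abs_mul, abs_mul, abs_of_pos hW]
      have h2 : |f y| * |⟪gradient f y, y⟫| ≤
          (1/2) * (‖gradient f y‖ ^ 2 + f y ^ 2 * ‖y‖ ^ 2) := by
        have := mul_le_mul_of_nonneg_left hcs (abs_nonneg (f y))
        nlinarith [sq_nonneg (‖gradient f y‖ - |f y| * ‖y‖), sq_abs (f y), abs_nonneg (f y),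
          norm_nonneg y, norm_nonneg (gradient f y)]
      rw [Real.norm_eq_abs, Real.norm_eq_abs, h1]
      calc |f y| * |⟪gradient f y, y⟫| * w y
          ≤ ((1/2) * (‖gradient f y‖ ^ 2 + f y ^ 2 * ‖y‖ ^ 2)) * w y :=
            mul_le_mul_of_nonneg_right h2 hW.le
        _ = (1/2) * (‖gradient f y‖ ^ 2 * w y + f y ^ 2 * ‖y‖ ^ 2 * w y) := by ring
        _ ≤ |(1/2) * (‖gradient f y‖ ^ 2 * w y + f y ^ 2 * ‖y‖ ^ 2 * w y)| := le_abs_self _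
  obtain ⟨hIC, hCD⟩ := fubini_core hopen hcone hw_pos hwm hhom hnα h0 f hf hdecay hID
  set D := ∫ x in Ω, (f x * ⟪gradient f x, x⟫) * w x with hDdef
  have hD : D = -(((n : ℝ) + α) / 2) * C := by
    have h' : C = -(2 / ((n : ℝ) + α)) * D := hCD
    rw [h']
    field_simp
  -- positivity of B
  have hBnonneg : 0 ≤ B := by
    apply setIntegral_nonneg hopen.measurableSet
    intro x hx
    have := hw_pos x hx
    positivity
  have hBpos : 0 < B := by
    rcases hBnonneg.lt_or_eq with h | h
    · exact h
    · exfalso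
      have hzero : (fun x => f x ^ 2 * ‖x‖ ^ 2 * w x) =ᵐ[volume.restrict Ω] 0 := by
        rw [← integral_eq_zero_iff_of_nonneg_ae _ hIB]
        · exact h.symm
        · filter_upwards [hwae] with x hx
          have := hw_pos x hx
          positivity
      -- hence f vanishes on Ω
      have hae : ∀ᵐ x ∂(volume.restrict Ω), f x = 0 ∨ x = 0 := by
        filter_upwards [hzero, hwae] with x hx hxΩ
        have hW : 0 < w x := hw_pos x hxΩ
        by_contra hcontra
        push_neg at hcontra
        obtain ⟨hf1, hx1⟩ := hcontra
        have : 0 < f x ^ 2 * ‖x‖ ^ 2 * w x := by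
          have h1 : 0 < f x ^ 2 := by positivity
          have h2 : 0 < ‖x‖ ^ 2 := by
            have := norm_pos_iff.2 hx1
            positivity
          positivity
        rw [Pi.zero_apply] at hx
        linarith [hx, this]
      have hmeaszero : volume (Ω ∩ {x | ¬(f x = 0 ∨ x = 0)}) = 0 := by
        have := ae_iff.1 hae
        rwa [Measure.restrict_apply' hopen.measurableSet, Set.inter_comm] at this
      set V : Set (EuclideanSpace ℝ (Fin n)) := Ω ∩ {x | f x ≠ 0} with hVdef
      have hVopen : IsOpen V := hopen.inter (isOpen_ne_fun hf.continuous continuous_const)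
      have hVnull : volume V = 0 := by
        apply le_antisymm _ zero_le
        calc volume V ≤ volume ((Ω ∩ {x | ¬(f x = 0 ∨ x = 0)}) ∪ {0}) := by
              apply measure_mono
              intro x hx
              rcases eq_or_ne x 0 with h0' | h0'
              · exact Or.inr (by simp [h0'])
              · exact Or.inl ⟨hx.1, fun hc => hc.elim (fun h => hx.2 h) h0'⟩
          _ ≤ volume (Ω ∩ {x | ¬(f x = 0 ∨ x = 0)}) + volume {0} := measure_union_le _ _
          _ = 0 := by rw [hmeaszero, h0, add_zero]
      have hVempty : V = ∅ := hVopen.eq_empty_of_measure_zero hVnull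
      -- f = 0 on Ω, so gradient f = 0 on Ω
      have hfzero : ∀ x ∈ Ω, f x = 0 := by
        intro x hx
        by_contra hc
        have hxV : x ∈ V := ⟨hx, hc⟩
        rw [hVempty] at hxV
        exact hxV
      have hgradzero : ∀ x ∈ Ω, gradient f x = 0 := by
        intro x hx
        have hev : f =ᶠ[nhds x] (fun _ => (0:ℝ)) := by
          filter_upwards [hopen.mem_nhds hx] with y hy
          exact hfzero y hy
        have : fderiv ℝ f x = fderiv ℝ (fun _ => (0:ℝ)) x := hev.fderiv_eq
        rw [fderiv_fun_const] at this
        show (InnerProductSpace.toDual ℝ _).symm (fderiv ℝ f x) = 0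
        rw [this]
        simp
      have : A = 0 := by
        rw [hAdef, setIntegral_congr_fun hopen.measurableSet
          (g := fun _ => (0:ℝ)) (fun x hx => by rw [hgradzero x hx]; simp), integral_zero]
      rw [this] at hApos
      exact lt_irrefl 0 hApos
  -- lam facts
  have hBA : 0 < B / A := div_pos hBpos hApos
  have hlampos : 0 < lam := by
    rw [hlam]
    exact Real.rpow_pos_of_pos hBA _
  set s := A ^ ((1:ℝ)/2) with hsdef
  set b := B ^ ((1:ℝ)/2) with hbdef
  have hs : 0 < s := Real.rpow_pos_of_pos hApos _
  have hb : 0 < b := Real.rpow_pos_of_pos hBpos _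
  have hs2 : s ^ 2 = A := by
    rw [hsdef, ← Real.rpow_natCast (A ^ ((1:ℝ)/2)) 2, ← Real.rpow_mul hApos.le]
    norm_num
  have hb2 : b ^ 2 = B := by
    rw [hbdef, ← Real.rpow_natCast (B ^ ((1:ℝ)/2)) 2, ← Real.rpow_mul hBpos.le]
    norm_num
  have hlam2 : lam ^ 2 = b / s := by
    rw [hlam, ← Real.rpow_natCast ((B/A) ^ ((1:ℝ)/4)) 2, ← Real.rpow_mul hBA.le]
    norm_num
    rw [Real.div_rpow hBpos.le hApos.le]
  -- expand the right-hand integrand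
  have hexpand : ∀ x, ‖gradient (fun y => f y * Real.exp (‖y‖ ^ 2 / (2 * lam ^ 2))) x‖ ^ 2 *
      Real.exp (-‖x‖ ^ 2 / lam ^ 2) * w x
      = ‖gradient f x‖ ^ 2 * w x + (2 / lam ^ 2) * ((f x * ⟪gradient f x, x⟫) * w x)
        + (1 / lam ^ 4) * (f x ^ 2 * ‖x‖ ^ 2 * w x) := by
    intro x
    rw [grad_sq_expand f hf lam hlampos.ne' x]
    ring
  have hRHS : ∫ x in Ω,
      ‖gradient (fun y => f y * Real.exp (‖y‖ ^ 2 / (2 * lam ^ 2))) x‖ ^ 2 *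
        Real.exp (-‖x‖ ^ 2 / lam ^ 2) * w x
      = A + (2 / lam ^ 2) * D + (1 / lam ^ 4) * B := by
    have h2' : Integrable (fun x => 2 / lam ^ 2 * (f x * ⟪gradient f x, x⟫ * w x))
        (volume.restrict Ω) := hID.const_mul _
    have h3' : Integrable (fun x => 1 / lam ^ 4 * (f x ^ 2 * ‖x‖ ^ 2 * w x))
        (volume.restrict Ω) := hIB.const_mul _
    have h12 : Integrable (fun x => ‖gradient f x‖ ^ 2 * w x +
        2 / lam ^ 2 * (f x * ⟪gradient f x, x⟫ * w x)) (volume.restrict Ω) := hIA.add h2'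
    rw [integral_congr_ae (Filter.Eventually.of_forall hexpand)]
    rw [integral_add h12 h3', integral_add hIA h2', integral_const_mul, integral_const_mul]
  rw [hRHS, hD, show (lam ^ 4 : ℝ) = (lam ^ 2) ^ 2 by ring, hlam2]
  rw [← hs2, ← hb2]
  field_simp
  ring
end

section
/- Let ν = w dx with w log-concave, homogeneous of degree α ≥ 0 on the cone Σ, C_w = (∫_Σ w e^{−|x|²/2}dx)^{−1}, and f(x) = e^{−|x|²/4}. Then Ent_ν(f²) = (log C_w)/C_w − (n+α)/(2C_w), ∫_Σ f² dν = 1/C_w, ∫_Σ |∇f|² dν = (n+α)/(4C_w), and equality holds in the homogeneous log-Sobolev inequality Ent_ν(f²) = ((n+α)/2)(∫f²dν)·log( (4C_w^{2/(n+α)}/(e(n+α)))·∫|∇f|²dν / ∫f²dν ). -/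
open MeasureTheory Set Metric

lemma aux_indicator_smul {n : ℕ} {Ω : Set (EuclideanSpace ℝ (Fin n))}
    (hcone : ∀ t : ℝ, 0 < t → ∀ x ∈ Ω, t • x ∈ Ω)
    {w : EuclideanSpace ℝ (Fin n) → ℝ} {α : ℝ}
    (hhom : ∀ t : ℝ, 0 < t → ∀ x ∈ Ω, w (t • x) = t ^ α * w x)
    (ψ : ℝ → ℝ) {s : ℝ} (hs : 0 < s) (x : EuclideanSpace ℝ (Fin n)) :
    Ω.indicator (fun y => w y * ψ ‖y‖) (s • x)
      = Ω.indicator (fun y => s ^ α * (w y * ψ (s * ‖y‖))) x := by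
  by_cases hx : x ∈ Ω
  · rw [Set.indicator_of_mem (hcone s hs x hx), Set.indicator_of_mem hx, hhom s hs x hx,
      norm_smul]
    simp only [Real.norm_eq_abs, abs_of_pos hs]
    ring
  · rw [Set.indicator_of_notMem _, Set.indicator_of_notMem hx]
    intro h
    exact hx (by simpa [smul_smul, inv_mul_cancel₀ hs.ne'] using hcone s⁻¹ (by positivity) _ h)

lemma aux_scale_integral {n : ℕ} {Ω : Set (EuclideanSpace ℝ (Fin n))}
    (hopen : IsOpen Ω)
    (hcone : ∀ t : ℝ, 0 < t → ∀ x ∈ Ω, t • x ∈ Ω)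
    {w : EuclideanSpace ℝ (Fin n) → ℝ} {α : ℝ}
    (hhom : ∀ t : ℝ, 0 < t → ∀ x ∈ Ω, w (t • x) = t ^ α * w x)
    (ψ : ℝ → ℝ) {s : ℝ} (hs : 0 < s) :
    ∫ x in Ω, w x * ψ (s * ‖x‖) = (s ^ α)⁻¹ * ((s ^ n : ℝ))⁻¹ * ∫ x in Ω, w x * ψ ‖x‖ := by
  have h := MeasureTheory.Measure.integral_comp_smul
    (volume : Measure (EuclideanSpace ℝ (Fin n))) (Ω.indicator fun y => w y * ψ ‖y‖) s
  simp only [aux_indicator_smul hcone hhom ψ hs] at h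
  rw [integral_indicator hopen.measurableSet, integral_indicator hopen.measurableSet,
    integral_const_mul, finrank_euclideanSpace_fin, smul_eq_mul,
    abs_of_nonneg (inv_nonneg.2 (pow_nonneg hs.le _))] at h
  have hsα : (0:ℝ) < s ^ α := Real.rpow_pos_of_pos hs α
  calc ∫ x in Ω, w x * ψ (s * ‖x‖)
      = (s ^ α)⁻¹ * (s ^ α * ∫ x in Ω, w x * ψ (s * ‖x‖)) := by
        rw [← mul_assoc, inv_mul_cancel₀ hsα.ne', one_mul]
    _ = (s ^ α)⁻¹ * ((s ^ n : ℝ))⁻¹ * ∫ x in Ω, w x * ψ ‖x‖ := by rw [h]; ring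

lemma aux_scale_integrable {n : ℕ} {Ω : Set (EuclideanSpace ℝ (Fin n))}
    (hopen : IsOpen Ω)
    (hcone : ∀ t : ℝ, 0 < t → ∀ x ∈ Ω, t • x ∈ Ω)
    {w : EuclideanSpace ℝ (Fin n) → ℝ} {α : ℝ}
    (hhom : ∀ t : ℝ, 0 < t → ∀ x ∈ Ω, w (t • x) = t ^ α * w x)
    (ψ : ℝ → ℝ) {s : ℝ} (hs : 0 < s)
    (h : IntegrableOn (fun x => w x * ψ ‖x‖) Ω) :
    IntegrableOn (fun x => w x * ψ (s * ‖x‖)) Ω := by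
  have h1 : Integrable (Ω.indicator fun y => w y * ψ ‖y‖) volume :=
    (integrable_indicator_iff hopen.measurableSet).2 h
  have h2 := (integrable_comp_smul_iff volume
    (Ω.indicator fun y => w y * ψ ‖y‖) hs.ne').2 h1
  simp only [aux_indicator_smul hcone hhom ψ hs] at h2
  rw [integrable_indicator_iff hopen.measurableSet] at h2
  have h3 := h2.const_mul ((s ^ α)⁻¹)
  show Integrable _ (volume.restrict Ω)
  simpa [← mul_assoc, inv_mul_cancel₀ (Real.rpow_pos_of_pos hs α).ne'] using h3

lemma aux_grad {E : Type*} [NormedAddCommGroup E] [InnerProductSpace ℝ E] [CompleteSpace E]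
    (x : E) :
    HasGradientAt (fun y : E => Real.exp (-‖y‖ ^ 2 / 4))
      ((-(1/2) * Real.exp (-‖x‖ ^ 2 / 4)) • x) x := by
  rw [hasGradientAt_iff_hasFDerivAt]
  have h1 : HasFDerivAt (fun y : E => (inner ℝ y y : ℝ))
      ((fderivInnerCLM ℝ (x, x)).comp ((ContinuousLinearMap.id ℝ _).prod
        (ContinuousLinearMap.id ℝ _))) x :=
    (hasFDerivAt_id x).inner ℝ (hasFDerivAt_id x)
  have h2 := h1.const_smul (-(1/4) : ℝ)
  have h3 := (Real.hasDerivAt_exp ((-(1/4) : ℝ) • (inner ℝ x x : ℝ))).comp_hasFDerivAt x h2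
  have heq : (fun y : E => Real.exp (-‖y‖ ^ 2 / 4))
      = fun y : E => Real.exp ((-(1/4) : ℝ) • (inner ℝ y y : ℝ)) := by
    funext y; rw [real_inner_self_eq_norm_sq]; norm_num; ring_nf
  rw [heq]
  refine h3.congr_fderiv ?_
  · ext y
    simp only [ContinuousLinearMap.coe_smul', Pi.smul_apply, ContinuousLinearMap.coe_comp',
      Function.comp_apply, ContinuousLinearMap.prod_apply, ContinuousLinearMap.coe_id', id_eq,
      fderivInnerCLM_apply, InnerProductSpace.toDual_apply_apply, real_inner_smul_left, smul_eq_mul,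
      real_inner_self_eq_norm_sq]
    rw [real_inner_comm y x]
    ring_nf

lemma aux_moment {n : ℕ} {Ω : Set (EuclideanSpace ℝ (Fin n))}
    (hopen : IsOpen Ω)
    (hcone : ∀ t : ℝ, 0 < t → ∀ x ∈ Ω, t • x ∈ Ω)
    {w : EuclideanSpace ℝ (Fin n) → ℝ} {α : ℝ}
    (hw_pos : ∀ x ∈ Ω, 0 < w x) (hw_cont : ContinuousOn w Ω)
    (hhom : ∀ t : ℝ, 0 < t → ∀ x ∈ Ω, w (t • x) = t ^ α * w x)
    (hint : IntegrableOn
      (fun x => w x * Real.exp (-‖x‖ ^ 2 / 2) * (1 + ‖x‖ ^ 2)) Ω) :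
    ∫ x in Ω, w x * (‖x‖ ^ 2 * Real.exp (-‖x‖ ^ 2 / 2))
      = ((n : ℝ) + α) * ∫ x in Ω, w x * Real.exp (-‖x‖ ^ 2 / 2) := by
  set β : ℝ := (n : ℝ) + α with hβ
  have hwm : AEStronglyMeasurable w (volume.restrict Ω) :=
    hw_cont.aestronglyMeasurable hopen.measurableSet
  have hcont0 : Continuous fun x : EuclideanSpace ℝ (Fin n) => Real.exp (-‖x‖ ^ 2 / 2) :=
    Real.continuous_exp.comp (((continuous_norm.pow 2)).neg.div_const 2)
  have hcontF : ∀ s : ℝ, Continuous fun x : EuclideanSpace ℝ (Fin n) =>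
      Real.exp (-(s ^ 2 * ‖x‖ ^ 2) / 2) := fun s =>
    Real.continuous_exp.comp ((continuous_const.mul (continuous_norm.pow 2)).neg.div_const 2)
  have hcontF' : Continuous fun x : EuclideanSpace ℝ (Fin n) =>
      Real.exp (-((1:ℝ) ^ 2 * ‖x‖ ^ 2) / 2) * (-((1:ℝ) * ‖x‖ ^ 2)) :=
    (hcontF 1).mul (continuous_const.mul (continuous_norm.pow 2)).neg
  -- integrability of Z and M integrands
  have hZint : IntegrableOn (fun x => w x * Real.exp (-‖x‖ ^ 2 / 2)) Ω := by
    refine Integrable.mono hint (hwm.mul hcont0.aestronglyMeasurable)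
      (Filter.Eventually.of_forall fun x => ?_)
    have h1 : (0:ℝ) < 1 + ‖x‖ ^ 2 := by positivity
    rw [Real.norm_eq_abs, Real.norm_eq_abs, abs_mul (w x * _), abs_of_pos h1]
    nlinarith [abs_nonneg (w x * Real.exp (-‖x‖ ^ 2 / 2))]
  have hMint : IntegrableOn (fun x => w x * (‖x‖ ^ 2 * Real.exp (-‖x‖ ^ 2 / 2))) Ω := by
    refine Integrable.mono hint
      (hwm.mul (((continuous_norm.pow 2).mul hcont0).aestronglyMeasurable))
      (Filter.Eventually.of_forall fun x => ?_)
    have h1 : (0:ℝ) < 1 + ‖x‖ ^ 2 := by positivity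
    rw [Real.norm_eq_abs, Real.norm_eq_abs, abs_mul (w x * _), abs_of_pos h1]
    have h2 : |w x * (‖x‖ ^ 2 * Real.exp (-‖x‖ ^ 2 / 2))|
        = |w x * Real.exp (-‖x‖ ^ 2 / 2)| * ‖x‖ ^ 2 := by
      rw [show w x * (‖x‖ ^ 2 * Real.exp (-‖x‖ ^ 2 / 2))
          = (w x * Real.exp (-‖x‖ ^ 2 / 2)) * ‖x‖ ^ 2 by ring, abs_mul,
        abs_of_nonneg (by positivity : (0:ℝ) ≤ ‖x‖ ^ 2)]
    rw [h2]
    nlinarith [abs_nonneg (w x * Real.exp (-‖x‖ ^ 2 / 2)), sq_nonneg ‖x‖]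
  set Z : ℝ := ∫ x in Ω, w x * Real.exp (-‖x‖ ^ 2 / 2) with hZdef
  set M : ℝ := ∫ x in Ω, w x * (‖x‖ ^ 2 * Real.exp (-‖x‖ ^ 2 / 2)) with hMdef
  set F : ℝ → EuclideanSpace ℝ (Fin n) → ℝ :=
    fun s x => w x * Real.exp (-(s ^ 2 * ‖x‖ ^ 2) / 2) with hF
  set F' : ℝ → EuclideanSpace ℝ (Fin n) → ℝ :=
    fun s x => w x * (Real.exp (-(s ^ 2 * ‖x‖ ^ 2) / 2) * (-(s * ‖x‖ ^ 2))) with hF'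
  set I : ℝ → ℝ := fun s => ∫ x in Ω, F s x with hI
  -- scaling identity
  have hscale : ∀ s : ℝ, 0 < s → I s = s ^ (-β) * Z := by
    intro s hs
    have h := aux_scale_integral hopen hcone hhom (fun r => Real.exp (-r ^ 2 / 2)) hs
    have e1 : (fun x : EuclideanSpace ℝ (Fin n) =>
        w x * (fun r : ℝ => Real.exp (-r ^ 2 / 2)) (s * ‖x‖)) = F s := by
      funext x
      show w x * Real.exp (-(s * ‖x‖) ^ 2 / 2) = w x * Real.exp (-(s ^ 2 * ‖x‖ ^ 2) / 2)
      rw [mul_pow]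
    rw [hI]
    show (∫ x in Ω, F s x) = s ^ (-β) * Z
    rw [← e1, h]
    have : (∫ x in Ω, w x * (fun r : ℝ => Real.exp (-r ^ 2 / 2)) ‖x‖) = Z := rfl
    rw [this]
    rw [Real.rpow_neg hs.le, hβ, Real.rpow_add hs, Real.rpow_natCast, mul_inv]
    ring
  -- derivative of explicit formula
  have hJ : HasDerivAt (fun s : ℝ => s ^ (-β) * Z) (-β * Z) 1 := by
    have := (Real.hasDerivAt_rpow_const (x := (1:ℝ)) (p := -β)
      (Or.inl one_ne_zero)).mul_const Z
    simpa using this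
  have hIJ : HasDerivAt I (-β * Z) 1 := by
    refine hJ.congr_of_eventuallyEq ?_
    filter_upwards [isOpen_Ioi.mem_nhds (by norm_num : (1:ℝ) ∈ Set.Ioi 0)] with s hs
    exact hscale s hs
  -- integrable bound
  have hbound_int : IntegrableOn
      (fun x => (3/2 : ℝ) * (w x * (‖x‖ ^ 2 * Real.exp (-‖x‖ ^ 2 / 8)))) Ω := by
    have base : IntegrableOn
        (fun x => w x * ((fun r : ℝ => r ^ 2 * Real.exp (-r ^ 2 / 2)) ‖x‖)) Ω := hMint
    have h2 := aux_scale_integrable hopen hcone hhom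
      (fun r : ℝ => r ^ 2 * Real.exp (-r ^ 2 / 2)) (by norm_num : (0:ℝ) < 1/2) base
    have h3 : IntegrableOn (fun x =>
        (6 : ℝ) * (w x * ((1/2 * ‖x‖) ^ 2 * Real.exp (-(1/2 * ‖x‖) ^ 2 / 2)))) Ω :=
      h2.const_mul 6
    refine h3.congr_fun (fun x _ => ?_) hopen.measurableSet
    have h4 : -(1/2 * ‖x‖ : ℝ) ^ 2 / 2 = -‖x‖ ^ 2 / 8 := by ring
    beta_reduce; rw [h4]; ring
  -- dominated differentiation
  have hF_meas : ∀ᶠ s in nhds (1:ℝ), AEStronglyMeasurable (F s) (volume.restrict Ω) :=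
    Filter.Eventually.of_forall fun s => hwm.mul (hcontF s).aestronglyMeasurable
  have hF_int : Integrable (F 1) (volume.restrict Ω) := by
    have : F 1 = fun x => w x * Real.exp (-‖x‖ ^ 2 / 2) := by
      funext x; rw [hF]; norm_num
    rw [this]; exact hZint
  have hF'_meas : AEStronglyMeasurable (F' 1) (volume.restrict Ω) :=
    hwm.mul hcontF'.aestronglyMeasurable
  have h_bound : ∀ᵐ x ∂(volume.restrict Ω), ∀ s ∈ ball (1:ℝ) (1/2),
      ‖F' s x‖ ≤ (3/2 : ℝ) * (w x * (‖x‖ ^ 2 * Real.exp (-‖x‖ ^ 2 / 8))) := by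
    filter_upwards [ae_restrict_mem hopen.measurableSet] with x hx
    intro s hs
    rw [mem_ball, Real.dist_eq, abs_lt] at hs
    have hs1 : (1/2 : ℝ) < s := by linarith
    have hs2 : s < 3/2 := by linarith
    have hq : (0:ℝ) ≤ ‖x‖ ^ 2 := by positivity
    have hwx := (hw_pos x hx).le
    have he : Real.exp (-(s ^ 2 * ‖x‖ ^ 2) / 2) ≤ Real.exp (-‖x‖ ^ 2 / 8) := by
      apply Real.exp_le_exp.2
      have hs4 : (1:ℝ)/4 ≤ s ^ 2 := by nlinarith
      nlinarith [mul_le_mul_of_nonneg_left hs4 hq]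
    have hFnorm : ‖F' s x‖ = w x * (Real.exp (-(s ^ 2 * ‖x‖ ^ 2) / 2) * (s * ‖x‖ ^ 2)) := by
      have h5 : ‖F' s x‖
          = |w x * (Real.exp (-(s ^ 2 * ‖x‖ ^ 2) / 2) * (-(s * ‖x‖ ^ 2)))| := rfl
      rw [h5, show w x * (Real.exp (-(s ^ 2 * ‖x‖ ^ 2) / 2) * (-(s * ‖x‖ ^ 2)))
        = -(w x * (Real.exp (-(s ^ 2 * ‖x‖ ^ 2) / 2) * (s * ‖x‖ ^ 2))) by ring, abs_neg]
      exact abs_of_nonneg (by positivity)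
    rw [hFnorm]
    calc w x * (Real.exp (-(s ^ 2 * ‖x‖ ^ 2) / 2) * (s * ‖x‖ ^ 2))
        = (w x * ‖x‖ ^ 2) * (Real.exp (-(s ^ 2 * ‖x‖ ^ 2) / 2) * s) := by ring
      _ ≤ (w x * ‖x‖ ^ 2) * (Real.exp (-‖x‖ ^ 2 / 8) * (3/2)) := by
          apply mul_le_mul_of_nonneg_left _ (by positivity)
          exact mul_le_mul he hs2.le (by linarith) (by positivity)
      _ = (3/2 : ℝ) * (w x * (‖x‖ ^ 2 * Real.exp (-‖x‖ ^ 2 / 8))) := by ring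
  have h_diff : ∀ᵐ x ∂(volume.restrict Ω), ∀ s ∈ ball (1:ℝ) (1/2),
      HasDerivAt (fun s => F s x) (F' s x) s := by
    refine Filter.Eventually.of_forall fun x s _ => ?_
    have h0 := ((hasDerivAt_pow 2 s).mul_const (‖x‖ ^ 2)).neg.div_const 2
    have h0' : HasDerivAt (fun s : ℝ => -(s ^ 2 * ‖x‖ ^ 2) / 2) (-(s * ‖x‖ ^ 2)) s := by
      refine h0.congr_deriv ?_; norm_num; ring
    have h1 := (Real.hasDerivAt_exp (-(s ^ 2 * ‖x‖ ^ 2) / 2)).comp s h0'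
    exact h1.const_mul (w x)
  have hdom := hasDerivAt_integral_of_dominated_loc_of_deriv_le
    (ball_mem_nhds (1:ℝ) (by norm_num : (0:ℝ) < 1/2)) hF_meas hF_int hF'_meas h_bound hbound_int h_diff
  have huniq : (∫ x in Ω, F' 1 x) = -β * Z := hdom.2.unique hIJ
  have hM' : (∫ x in Ω, F' 1 x) = -M := by
    rw [hMdef, ← integral_neg]
    apply setIntegral_congr_fun hopen.measurableSet
    intro x _
    show w x * (Real.exp (-((1:ℝ) ^ 2 * ‖x‖ ^ 2) / 2) * (-((1:ℝ) * ‖x‖ ^ 2)))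
      = -(w x * (‖x‖ ^ 2 * Real.exp (-‖x‖ ^ 2 / 2)))
    simp only [one_pow, one_mul]
    ring
  rw [hM'] at huniq
  show M = β * Z
  linarith

/-- The Gaussian `f(x) = e^{−|x|²/4}` attains equality in the homogeneous log-Sobolev
inequality for a log-concave weight homogeneous of degree `α` on a cone; the three
explicit integral values and the equality case. -/
theorem lsi_homogeneous_equality {n : ℕ} (Ω : Set (EuclideanSpace ℝ (Fin n)))
    (hopen : IsOpen Ω) (hconv : Convex ℝ Ω)
    (hcone : ∀ t : ℝ, 0 < t → ∀ x ∈ Ω, t • x ∈ Ω)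
    (w : EuclideanSpace ℝ (Fin n) → ℝ) (α : ℝ) (hα : 0 ≤ α) (hn : 0 < (n : ℝ) + α)
    (hw_pos : ∀ x ∈ Ω, 0 < w x) (hw_smooth : ContDiffOn ℝ (⊤ : ℕ∞) w Ω)
    (hlogconc : ConcaveOn ℝ Ω fun x => Real.log (w x))
    (hhom : ∀ t : ℝ, 0 < t → ∀ x ∈ Ω, w (t • x) = t ^ α * w x)
    (hint : IntegrableOn
      (fun x => w x * Real.exp (-‖x‖ ^ 2 / 2) * (1 + ‖x‖ ^ 2)) Ω)
    (Z Cw : ℝ) (hZ : Z = ∫ x in Ω, w x * Real.exp (-‖x‖ ^ 2 / 2))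
    (hZpos : 0 < Z) (hCw : Cw = Z⁻¹)
    (f : EuclideanSpace ℝ (Fin n) → ℝ)
    (hf : f = fun x => Real.exp (-‖x‖ ^ 2 / 4)) :
    (∫ x in Ω, f x ^ 2 * w x) = 1 / Cw ∧
    ((∫ x in Ω, f x ^ 2 * Real.log (f x ^ 2) * w x)
        - (∫ x in Ω, f x ^ 2 * w x) * Real.log (∫ x in Ω, f x ^ 2 * w x))
      = Real.log Cw / Cw - ((n : ℝ) + α) / (2 * Cw) ∧
    (∫ x in Ω, ‖gradient f x‖ ^ 2 * w x) = ((n : ℝ) + α) / (4 * Cw) ∧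
    ((∫ x in Ω, f x ^ 2 * Real.log (f x ^ 2) * w x)
        - (∫ x in Ω, f x ^ 2 * w x) * Real.log (∫ x in Ω, f x ^ 2 * w x))
      = (((n : ℝ) + α) / 2) * (∫ x in Ω, f x ^ 2 * w x) *
        Real.log ((4 * Cw ^ ((2 : ℝ) / ((n : ℝ) + α)) /
          (Real.exp 1 * ((n : ℝ) + α))) *
          ((∫ x in Ω, ‖gradient f x‖ ^ 2 * w x) / ∫ x in Ω, f x ^ 2 * w x)) := by
  subst hf
  have hCwpos : 0 < Cw := by rw [hCw]; exact inv_pos.2 hZpos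
  set β : ℝ := (n : ℝ) + α with hβ
  set M : ℝ := ∫ x in Ω, w x * (‖x‖ ^ 2 * Real.exp (-‖x‖ ^ 2 / 2)) with hM
  have hmom : M = β * Z := by
    rw [hM, hZ]
    exact aux_moment hopen hcone hw_pos hw_smooth.continuousOn hhom hint
  have hf2 : ∀ x : EuclideanSpace ℝ (Fin n),
      Real.exp (-‖x‖ ^ 2 / 4) ^ 2 = Real.exp (-‖x‖ ^ 2 / 2) := by
    intro x
    rw [← Real.exp_nat_mul]
    congr 1
    push_cast
    ring
  -- first identity
  have p1 : (∫ x in Ω, Real.exp (-‖x‖ ^ 2 / 4) ^ 2 * w x) = Z := by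
    rw [hZ]
    congr 1
    funext x
    rw [hf2]
    ring
  have p1' : (∫ x in Ω, Real.exp (-‖x‖ ^ 2 / 4) ^ 2 * w x) = 1 / Cw := by
    rw [p1, hCw, one_div, inv_inv]
  -- entropy integral
  have p2 : (∫ x in Ω, Real.exp (-‖x‖ ^ 2 / 4) ^ 2
      * Real.log (Real.exp (-‖x‖ ^ 2 / 4) ^ 2) * w x) = -2⁻¹ * M := by
    rw [hM, ← integral_const_mul]
    congr 1
    funext x
    rw [hf2, Real.log_exp]
    ring
  -- gradient integral
  have hgradnorm : ∀ x : EuclideanSpace ℝ (Fin n),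
      ‖gradient (fun y : EuclideanSpace ℝ (Fin n) => Real.exp (-‖y‖ ^ 2 / 4)) x‖ ^ 2
        = 4⁻¹ * (‖x‖ ^ 2 * Real.exp (-‖x‖ ^ 2 / 2)) := by
    intro x
    rw [(aux_grad x).gradient, norm_smul, Real.norm_eq_abs, mul_pow, sq_abs, mul_pow, ← hf2 x]
    ring
  have p3 : (∫ x in Ω, ‖gradient (fun y : EuclideanSpace ℝ (Fin n) =>
      Real.exp (-‖y‖ ^ 2 / 4)) x‖ ^ 2 * w x) = 4⁻¹ * M := by
    rw [hM, ← integral_const_mul]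
    congr 1
    funext x
    rw [hgradnorm]
    ring
  have p3' : (∫ x in Ω, ‖gradient (fun y : EuclideanSpace ℝ (Fin n) =>
      Real.exp (-‖y‖ ^ 2 / 4)) x‖ ^ 2 * w x) = β / (4 * Cw) := by
    rw [p3, hmom, hCw]
    field_simp
  -- second conjunct
  have p2' : (∫ x in Ω, Real.exp (-‖x‖ ^ 2 / 4) ^ 2
        * Real.log (Real.exp (-‖x‖ ^ 2 / 4) ^ 2) * w x)
      - (∫ x in Ω, Real.exp (-‖x‖ ^ 2 / 4) ^ 2 * w x)
        * Real.log (∫ x in Ω, Real.exp (-‖x‖ ^ 2 / 4) ^ 2 * w x)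
      = Real.log Cw / Cw - β / (2 * Cw) := by
    rw [p2, p1, hmom, hCw, Real.log_inv]
    field_simp
    ring
  refine ⟨p1', p2', p3', ?_⟩
  rw [p2', p1', p3']
  have harg : (4 * Cw ^ ((2 : ℝ) / β) / (Real.exp 1 * β)) * ((β / (4 * Cw)) / (1 / Cw))
      = Cw ^ ((2 : ℝ) / β) / Real.exp 1 := by
    field_simp
  rw [harg, Real.log_div (Real.rpow_pos_of_pos hCwpos _).ne' (Real.exp_ne_zero 1),
    Real.log_rpow hCwpos, Real.log_exp]
  field_simp
end
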